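/- Let C be a finite set and N ⊆ C a subset with |N| even and |N| ≥ 2, and suppose |C ∖ N| is odd. Then, in the sign-assignment game on C, the first player can force the final assignment f to satisfy Σ_{x∈N} f(x) ∈ {2, −2}; in particular, the first player can force Σ_{x∈N} f(x) ≠ 0. -/

import Mathlib

/-!
The first player opens outside `N` and afterwards always answers in the part of the partition
`{N, Nᶜ}` where the opponent has just moved. As `|N|` is even and `|Nᶜ|` is odd, after each of the
first player's moves both parts have an even number of free crossings, so such an answer is always
available. Inside `N` the moves therefore come in pairs, and the answer's sign brings the running
sum over `N` from `±1` or `±3` back to `±2`; since `N` is nonempty, the final sum is `±2`.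
-/

section SignGame

variable {C : Type*} [Fintype C]

/-- A play of the sign-assignment game is a list of moves, each assigning a sign to a
crossing; it is legal if no crossing is chosen twice and every sign is `+1` or `-1`. -/
def LegalPlay (p : List (C × ℤ)) : Prop :=
  (p.map Prod.fst).Nodup ∧ ∀ m ∈ p, m.2 = 1 ∨ m.2 = -1

/-- The play `p` follows the strategy `σ` of the player who moves at all positions whose
number of prior moves is congruent to `parity` mod 2 (`parity = 0`: first player;
`parity = 1`: second player). -/
def Follows (parity : ℕ) (σ : List (C × ℤ) → C × ℤ) (p : List (C × ℤ)) : Prop :=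
  ∀ (i : ℕ) (hi : i < p.length), i % 2 = parity → p.get ⟨i, hi⟩ = σ (p.take i)

/-- The strategy `σ` always produces a legal move (an unchosen crossing with sign `±1`)
at the positions where its player is to move. -/
def LegalStrat (parity : ℕ) (σ : List (C × ℤ) → C × ℤ) : Prop :=
  ∀ p : List (C × ℤ), LegalPlay p → p.length % 2 = parity → p.length < Fintype.card C →
    (σ p).1 ∉ p.map Prod.fst ∧ ((σ p).2 = 1 ∨ (σ p).2 = -1)

/-- The player moving at positions of parity `parity` can force the predicate `P` on
complete plays: they have a legal strategy such that every complete legal play following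
it satisfies `P`. -/
def CanForce (parity : ℕ) (P : List (C × ℤ) → Prop) : Prop :=
  ∃ σ : List (C × ℤ) → C × ℤ, LegalStrat parity σ ∧
    ∀ p : List (C × ℤ), LegalPlay p → p.length = Fintype.card C → Follows parity σ p → P p

end SignGame

/-- The crossings of the resolution game on syllable sizes `n = (n_1, …, n_k)`:
pairs `(i, j)` with `i` a syllable index and `j < n_i`. -/
abbrev Cr (n : List ℕ) : Type := Σ i : Fin n.length, Fin (n.get i)

/-- The resulting word `(s_1, …, s_k)` of a complete play of the resolution game:
`s_i` is the sum of the signs assigned to the crossings of the `i`-th syllable. -/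
def result (n : List ℕ) (p : List (Cr n × ℤ)) : List ℤ :=
  (List.finRange n.length).map fun i =>
    ((p.filter fun m => decide (m.1.1 = i)).map Prod.snd).sum

/-- Twice the linking number of the final diagram: the sum of the signs assigned to the
crossings in the set `N` of non-self-intersections. -/
def nsiSum {C : Type*} [DecidableEq C] (N : Finset C) (p : List (C × ℤ)) : ℤ :=
  ((p.filter fun m => decide (m.1 ∈ N)).map Prod.snd).sum

open Finset

section Plays

variable {C : Type*} {σ : List (C × ℤ) → C × ℤ} {q r : List (C × ℤ)}

theorem LegalPlay.of_append (h : LegalPlay (q ++ r)) : LegalPlay q :=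
  ⟨(List.map_append .. ▸ h.1).sublist (List.sublist_append_left _ _),
    fun m hm => h.2 m (List.mem_append_left r hm)⟩

theorem Follows.of_append {parity : ℕ} (h : Follows parity σ (q ++ r)) : Follows parity σ q := by
  intro i hi hpar
  simpa [List.getElem_append_left hi, List.take_append_of_le_length hi.le] using
    h i (by simp; omega) hpar

theorem Follows.eq_of_singleton {a : C × ℤ} (h : Follows 0 σ [a]) : a = σ [] :=
  h 0 (by simp) rfl

theorem Follows.eq_of_append_pair {m m' : C × ℤ} (h : Follows 0 σ (q ++ [m, m']))
    (hq : Odd q.length) : m' = σ (q ++ [m]) := by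
  have := h (q.length + 1) (by simp) (by rcases hq with ⟨k, hk⟩; omega)
  simpa [List.take_append, List.take_of_length_le] using this

theorem Follows.induction_odd (I : List (C × ℤ) → Prop)
    (start : I [σ []])
    (step : ∀ q m, LegalPlay (q ++ [m, σ (q ++ [m])]) → I q →
      I (q ++ [m, σ (q ++ [m])]))
    {p : List (C × ℤ)} (hp : LegalPlay p) (hf : Follows 0 σ p) (hodd : Odd p.length) :
    I p := by
  obtain ⟨n, hn⟩ := hodd
  induction n generalizing p with
  | zero =>
    obtain ⟨a, rfl⟩ := List.length_eq_one_iff.1 hn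
    exact hf.eq_of_singleton ▸ start
  | succ n ih =>
    obtain ⟨m, m', hmm'⟩ := List.length_eq_two.1
      (show (p.drop (2 * n + 1)).length = 2 by simp; omega)
    have hsplit : p = p.take (2 * n + 1) ++ [m, m'] := by
      rw [← hmm', List.take_append_drop]
    have hq : (p.take (2 * n + 1)).length = 2 * n + 1 := by simp; omega
    rw [hsplit] at hp hf ⊢
    obtain rfl := hf.eq_of_append_pair ⟨n, hq⟩
    exact step _ _ hp (ih hp.of_append hf.of_append hq)

theorem CanForce.mono [Fintype C] {parity : ℕ} {P Q : List (C × ℤ) → Prop}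
    (h : CanForce parity P) (hPQ : ∀ p, P p → Q p) : CanForce parity Q :=
  let ⟨σ, hσ, hP⟩ := h
  ⟨σ, hσ, fun p hp hlen hf => hPQ p (hP p hp hlen hf)⟩

end Plays

namespace Finset

variable {α : Type*} [DecidableEq α]

theorem even_card_sdiff_insert_insert_iff {s t : Finset α} {a b : α} (hab : a ≠ b)
    (ha : a ∉ t) (hb : b ∉ t) (hs : a ∈ s ↔ b ∈ s) :
    Even #(s \ insert b (insert a t)) ↔ Even #(s \ t) := by
  have key := card_sdiff_add_card_inter s (insert b (insert a t))
  rw [← card_sdiff_add_card_inter s t] at key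
  by_cases has : a ∈ s
  · rw [inter_insert_of_mem (hs.1 has), inter_insert_of_mem has,
      card_insert_of_notMem (by simp [Ne.symm hab, hb]), card_insert_of_notMem (by simp [ha])]
      at key
    rw [show #(s \ t) = #(s \ insert b (insert a t)) + 2 by omega]
    simp [Nat.even_add]
  · rw [inter_insert_of_notMem (mt hs.2 has), inter_insert_of_notMem has] at key
    rw [show #(s \ t) = #(s \ insert b (insert a t)) by omega]

theorem sdiff_insert_nonempty_of_even {s t : Finset α} {a : α} (ha : a ∈ s \ t)
    (h : Even #(s \ t)) : (s \ insert a t).Nonempty := by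
  rw [← card_pos, sdiff_insert, card_erase_of_mem ha]
  have := card_pos.2 ⟨a, ha⟩
  obtain ⟨k, hk⟩ := h
  omega

end Finset

noncomputable def pickPreferring {α : Type*} (d : α) (s t : Finset α) : α :=
  if hs : s.Nonempty then hs.choose else if ht : t.Nonempty then ht.choose else d

theorem pickPreferring_mem_left {α : Type*} {d : α} {s t : Finset α} (hs : s.Nonempty) :
    pickPreferring d s t ∈ s := by
  rw [pickPreferring, dif_pos hs]
  exact hs.choose_spec

theorem pickPreferring_mem_right {α : Type*} {d : α} {s t : Finset α} (hst : s ⊆ t)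
    (ht : t.Nonempty) : pickPreferring d s t ∈ t := by
  by_cases hs : s.Nonempty
  · exact hst (pickPreferring_mem_left hs)
  · rw [pickPreferring, dif_neg hs, dif_pos ht]
    exact ht.choose_spec

/-- The sign that moves an odd `s` with `|s| ≤ 3` to `2` or `-2`. -/
def responseSign (s : ℤ) : ℤ := if s = 1 ∨ s = -3 then 1 else -1

theorem responseSign_eq_one_or_neg_one (s : ℤ) : responseSign s = 1 ∨ responseSign s = -1 := by
  unfold responseSign; split_ifs <;> simp

theorem add_responseSign {s : ℤ} (hs : s = 1 ∨ s = -1 ∨ s = 3 ∨ s = -3) :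
    s + responseSign s = 2 ∨ s + responseSign s = -2 := by
  rcases hs with rfl | rfl | rfl | rfl <;> decide

section PairingStrategy

variable {C : Type*} [DecidableEq C]

def played (p : List (C × ℤ)) : Finset C := (p.map Prod.fst).toFinset

@[simp]
theorem mem_played {p : List (C × ℤ)} {x : C} : x ∈ played p ↔ x ∈ p.map Prod.fst := by
  simp [played]

theorem played_append_singleton (q : List (C × ℤ)) (m : C × ℤ) :
    played (q ++ [m]) = insert m.1 (played q) := by
  ext x; simp [or_comm]

theorem played_append_pair (q : List (C × ℤ)) (m m' : C × ℤ) :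
    played (q ++ [m, m']) = insert m'.1 (insert m.1 (played q)) := by
  rw [show q ++ [m, m'] = q ++ [m] ++ [m'] by simp, played_append_singleton,
    played_append_singleton]

theorem LegalPlay.card_played {p : List (C × ℤ)} (hp : LegalPlay p) : #(played p) = p.length := by
  rw [played, List.toFinset_card_of_nodup hp.1, List.length_map]

theorem LegalPlay.played_eq_univ [Fintype C] {p : List (C × ℤ)} (hp : LegalPlay p)
    (hlen : p.length = Fintype.card C) : played p = univ :=
  eq_univ_of_card _ (hp.card_played.trans hlen)

theorem nsiSum_append_singleton (N : Finset C) (q : List (C × ℤ)) (m : C × ℤ) :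
    nsiSum N (q ++ [m]) = nsiSum N q + if m.1 ∈ N then m.2 else 0 := by
  by_cases h : m.1 ∈ N <;> simp [nsiSum, List.filter_append, h]

theorem nsiSum_eq_zero_of_disjoint {N : Finset C} {p : List (C × ℤ)}
    (h : Disjoint N (played p)) : nsiSum N p = 0 := by
  rw [nsiSum, List.filter_eq_nil_iff.2, List.map_nil, List.sum_nil]
  intro m hm
  simpa using disjoint_right.1 h (mem_played.2 (List.mem_map_of_mem hm))

variable [Fintype C]

def responseSide (N : Finset C) (p : List (C × ℤ)) : Finset C :=
  match p.getLast? with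
  | some m => if m.1 ∈ N then N else Nᶜ
  | none => Nᶜ

theorem responseSide_nil (N : Finset C) : responseSide N [] = Nᶜ := rfl

theorem responseSide_append_singleton (N : Finset C) (q : List (C × ℤ)) (m : C × ℤ) :
    responseSide N (q ++ [m]) = if m.1 ∈ N then N else Nᶜ := by
  simp [responseSide]

theorem mem_responseSide_append_singleton {N : Finset C} {q : List (C × ℤ)} {m : C × ℤ}
    {x : C} : x ∈ responseSide N (q ++ [m]) ↔ (x ∈ N ↔ m.1 ∈ N) := by
  rw [responseSide_append_singleton]
  by_cases h : m.1 ∈ N <;> simp [h]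

noncomputable def pairingStrategy (N : Finset C) (d : C) (p : List (C × ℤ)) : C × ℤ :=
  (pickPreferring d (responseSide N p \ played p) (played p)ᶜ, responseSign (nsiSum N p))

theorem pairingStrategy_fst_mem {N : Finset C} {d : C} {p : List (C × ℤ)}
    (h : (responseSide N p \ played p).Nonempty) :
    (pairingStrategy N d p).1 ∈ responseSide N p \ played p :=
  pickPreferring_mem_left h

theorem pairingStrategy_legal (N : Finset C) (d : C) : LegalStrat 0 (pairingStrategy N d) := by
  intro p hp _ hlt
  have hfree : ((played p)ᶜ).Nonempty := by
    rw [← card_pos, card_compl, hp.card_played]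
    omega
  have hmem := pickPreferring_mem_right (d := d) (s := responseSide N p \ played p)
    (fun x hx => mem_compl.2 (mem_sdiff.1 hx).2) hfree
  rw [mem_compl, mem_played] at hmem
  exact ⟨hmem, responseSign_eq_one_or_neg_one _⟩

def PairedPosition (N : Finset C) (q : List (C × ℤ)) : Prop :=
  Even #(N \ played q) ∧ Even #(Nᶜ \ played q) ∧
    (nsiSum N q = 2 ∨ nsiSum N q = -2 ∨ Disjoint N (played q))

theorem pairedPosition_opening {N : Finset C} (d : C) (hN : Even #N) (hNc : Odd #Nᶜ) :
    PairedPosition N [pairingStrategy N d []] := by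
  have hx := pairingStrategy_fst_mem (d := d) (N := N) (p := [])
    (by simpa [responseSide_nil, played] using card_pos.1 hNc.pos)
  simp only [responseSide_nil, played, List.map_nil, List.toFinset_nil, sdiff_empty,
    mem_compl] at hx
  set x := (pairingStrategy N d []).1
  have hplayed : played [pairingStrategy N d []] = {x} := by ext; simp [x]
  refine ⟨?_, ?_, Or.inr (Or.inr ?_)⟩
  · rwa [hplayed, sdiff_singleton_eq_erase, erase_eq_self.2 hx]
  · rw [hplayed, sdiff_singleton_eq_erase, card_erase_of_mem (mem_compl.2 hx)]
    exact Nat.Odd.sub_odd hNc odd_one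
  · rw [hplayed]
    exact disjoint_singleton_right.2 hx

end PairingStrategy

namespace PairedPosition

variable {C : Type*} [Fintype C] [DecidableEq C] {N : Finset C} {d : C} {q : List (C × ℤ)}
  {m : C × ℤ}

theorem answer_mem (h : PairedPosition N q) (hm : m.1 ∉ played q) :
    (pairingStrategy N d (q ++ [m])).1 ∈ responseSide N (q ++ [m]) \ played (q ++ [m]) := by
  apply pairingStrategy_fst_mem
  rw [played_append_singleton]
  refine sdiff_insert_nonempty_of_even
    (mem_sdiff.2 ⟨mem_responseSide_append_singleton.2 Iff.rfl, hm⟩) ?_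
  rw [responseSide_append_singleton]
  split_ifs
  exacts [h.1, h.2.1]

theorem step (h : PairedPosition N q) (hp : LegalPlay (q ++ [m])) :
    PairedPosition N (q ++ [m, pairingStrategy N d (q ++ [m])]) := by
  set x := pairingStrategy N d (q ++ [m])
  have hm : m.1 ∉ played q := fun hmem =>
    (List.nodup_append.1 (List.map_append .. ▸ hp.1)).2.2 _ (mem_played.1 hmem) m.1 (by simp) rfl
  obtain ⟨hxside, hxfree⟩ := mem_sdiff.1 (h.answer_mem (d := d) hm)
  rw [mem_responseSide_append_singleton] at hxside
  rw [played_append_singleton, mem_insert, not_or] at hxfree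
  have hpar (S : Finset C) (hS : x.1 ∈ S ↔ m.1 ∈ S) :
      Even #(S \ played (q ++ [m, x])) ↔ Even #(S \ played q) := by
    rw [played_append_pair]
    exact even_card_sdiff_insert_insert_iff (Ne.symm hxfree.1) hm hxfree.2 hS.symm
  have hxside_compl : x.1 ∈ Nᶜ ↔ m.1 ∈ Nᶜ := by rwa [mem_compl, mem_compl, not_iff_not]
  refine ⟨(hpar N hxside).2 h.1, (hpar Nᶜ hxside_compl).2 h.2.1, ?_⟩
  have hsum : nsiSum N (q ++ [m, x]) =
      nsiSum N q + (if m.1 ∈ N then m.2 else 0) + (if x.1 ∈ N then x.2 else 0) := by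
    rw [show q ++ [m, x] = q ++ [m] ++ [x] by simp, nsiSum_append_singleton,
      nsiSum_append_singleton]
  by_cases hmN : m.1 ∈ N
  · have hx2 : x.2 = responseSign (nsiSum N q + m.2) := by
      simp [x, pairingStrategy, nsiSum_append_singleton, hmN]
    rw [hsum, if_pos hmN, if_pos (hxside.2 hmN), hx2]
    have hs : nsiSum N q = 2 ∨ nsiSum N q = -2 ∨ nsiSum N q = 0 :=
      h.2.2.imp_right (Or.imp_right nsiSum_eq_zero_of_disjoint)
    have hsign : m.2 = 1 ∨ m.2 = -1 := hp.2 m (by simp)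
    exact (add_responseSign (by omega)).imp_right Or.inl
  · rw [hsum, if_neg hmN, if_neg (mt hxside.1 hmN), add_zero, add_zero, played_append_pair,
      disjoint_insert_right, disjoint_insert_right]
    exact h.2.2.imp_right (Or.imp_right fun hd => ⟨mt hxside.1 hmN, hmN, hd⟩)

end PairedPosition

/-- in the sign-assignment game on a finite set `C` with `N ⊆ C`,
`|N|` even, `|N| ≥ 2` and `|C ∖ N|` odd, the first player can force
`Σ_{x ∈ N} f(x) ∈ {2, -2}`; in particular the first player can force
`Σ_{x ∈ N} f(x) ≠ 0`. -/
theorem first_forces_nonzero_linking {C : Type*} [Fintype C] [DecidableEq C]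
    (N : Finset C) (hEven : Even N.card) (h2 : 2 ≤ N.card)
    (hcompl : Odd Nᶜ.card) :
    CanForce 0 (fun p : List (C × ℤ) => nsiSum N p = 2 ∨ nsiSum N p = -2) ∧
    CanForce 0 (fun p : List (C × ℤ) => nsiSum N p ≠ 0) := by
  obtain ⟨d, hd⟩ : N.Nonempty := card_pos.1 (by omega)
  have hforce : CanForce 0 (fun p : List (C × ℤ) => nsiSum N p = 2 ∨ nsiSum N p = -2) := by
    refine ⟨pairingStrategy N d, pairingStrategy_legal N d, fun p hp hlen hf => ?_⟩
    have hodd : Odd p.length := by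
      rw [hlen, ← card_add_card_compl N]
      exact hEven.add_odd hcompl
    have hpaired := hf.induction_odd (PairedPosition N) (pairedPosition_opening d hEven hcompl)
      (fun q m hq hpos => hpos.step (LegalPlay.of_append (r := [_]) (by simpa using hq)))
      hp hodd
    refine (or_assoc.2 hpaired.2.2).resolve_right fun hdisj => ?_
    rw [hp.played_eq_univ hlen] at hdisj
    exact disjoint_left.1 hdisj hd (mem_univ d)
  exact ⟨hforce, hforce.mono fun p hp => by rcases hp with h | h <;> rw [h] <;> decide⟩
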